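/- arXiv:2004.07900 — 2 statements merged into one kernel-verified Lean document; each statement's English description precedes it below -/
import Mathlib

section
/- Let Z₀ be a set, and for each z ∈ Z₀ let M(z) be a set such that: (a) for each z, any property P that holds at one point of X(z) holds at all points of X(z) (relative identification within each z), and (b) for every partition Z₀ = Z₁ ∪ Z₂ with Z₁, Z₂ nonempty, (⋃_{z∈Z₁} M(z)) ∩ (⋃_{z∈Z₂} M(z)) ≠ ∅. If P holds at some point of X(z₀) for some z₀ ∈ Z₀, then P holds at every point of ⋃_{z∈Z₀} X(z). -/
/-- Theorem 1 abstracted: pasting relatively identified sets across values of the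
control z using the overlap condition on the supports M(z). -/
theorem stmt_6 {Wt Xt Zt : Type*}
    (Z₀ : Set Zt) (M : Zt → Set (Wt × Xt))
    (Xz : Zt → Set Xt) (hXz : ∀ z, Xz z = Prod.snd '' M z)
    (P : Xt → Prop)
    (hrel : ∀ z ∈ Z₀, ∀ x ∈ Xz z, ∀ x' ∈ Xz z, P x → P x')
    (hpaste : ∀ Z₁ Z₂ : Set Zt, Z₁ ∪ Z₂ = Z₀ → Z₁.Nonempty → Z₂.Nonempty →
      ((⋃ z ∈ Z₁, M z) ∩ ⋃ z ∈ Z₂, M z).Nonempty)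
    (z₀ : Zt) (hz₀ : z₀ ∈ Z₀) (x₀ : Xt) (hx₀ : x₀ ∈ Xz z₀) (hP₀ : P x₀) :
    ∀ z ∈ Z₀, ∀ x ∈ Xz z, P x := by
  set Z₁ : Set Zt := {z ∈ Z₀ | ∀ x ∈ Xz z, P x} with hZ₁
  set Z₂ : Set Zt := Z₀ \ Z₁ with hZ₂
  have hz₀Z₁ : z₀ ∈ Z₁ := ⟨hz₀, fun x hx => hrel z₀ hz₀ x₀ hx₀ x hx hP₀⟩
  have hZ₂e : Z₂ = ∅ := by
    by_contra h
    obtain ⟨p, ⟨hp1, hp2⟩⟩ := hpaste Z₁ Z₂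
      (by rw [hZ₂, Set.union_diff_cancel (fun z hz => hz.1)])
      ⟨z₀, hz₀Z₁⟩ (Set.nonempty_iff_ne_empty.2 h)
    simp only [Set.mem_iUnion] at hp1 hp2
    obtain ⟨z₁, hz₁, hpM1⟩ := hp1
    obtain ⟨z₂, hz₂, hpM2⟩ := hp2
    have hx1 : p.2 ∈ Xz z₁ := by rw [hXz]; exact ⟨p, hpM1, rfl⟩
    have hx2 : p.2 ∈ Xz z₂ := by rw [hXz]; exact ⟨p, hpM2, rfl⟩
    exact hz₂.2 ⟨hz₂.1, fun x hx =>
      hrel z₂ hz₂.1 p.2 hx2 x hx (hz₁.2 p.2 hx1)⟩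
  intro z hz x hx
  have : z ∈ Z₁ := by
    by_contra h
    have : z ∈ Z₂ := ⟨hz, h⟩
    rw [hZ₂e] at this
    exact this
  exact this.2 x hx
end

section
/- Let ε have a density with full support on ℝ^{J+1} and finite means, and let G(a) = E[max_j (a_j + ε_j)]. Then the map a ↦ ∇G(a), restricted to the hyperplane {a ∈ ℝ^{J+1} : a₀ = 0}, is injective into the interior of the unit simplex. -/
/-!
Ties `a j + ε j = a k + ε k` lie on hyperplanes, which are Lebesgue-null, so almost surely a
unique alternative attains the maximum. The integrand is 1-Lipschitz in the utilities, so one may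
differentiate under the integral: `∂ⱼ G(a)` is the probability that `j` is the strict argmax of
`a + ε`. These probabilities sum to one, and each is positive because the region of errors
choosing `j` is a nonempty open set. For injectivity, let `d = a' - a` be non-constant with
maximum at `j`. Passing from `a` to `a'` keeps every error that chose `j`, and additionally
captures the nonempty open set of errors that chose some `i` with `d i < d j` under `a` but choose
`j` under `a'`; hence the `j`-th choice probability strictly increases.
-/

open MeasureTheory Finset Filter Topology

section choiceSet

variable {ι : Type*}

def choiceSet (a : ι → ℝ) (j : ι) : Set (ι → ℝ) :=
  {x | ∀ k ≠ j, a k + x k < a j + x j}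

theorem mem_choiceSet_comm {a x : ι → ℝ} {j : ι} :
    x ∈ choiceSet a j ↔ a ∈ choiceSet x j := by
  simp only [choiceSet, Set.mem_ofPred_eq, add_comm (a _)]

theorem disjoint_choiceSet (a : ι → ℝ) {i j : ι} (hij : i ≠ j) :
    Disjoint (choiceSet a i) (choiceSet a j) :=
  Set.disjoint_left.2 fun _ hi hj => (hi j hij.symm).not_gt (hj i hij)

theorem choiceSet_subset_choiceSet_add {a d : ι → ℝ} {j : ι} (hmax : ∀ k, d k ≤ d j) :
    choiceSet a j ⊆ choiceSet (a + d) j := fun x hx k hk => by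
  simp only [Pi.add_apply]
  linarith [hx k hk, hmax k]

theorem choiceSet_nonempty (a : ι → ℝ) (j : ι) : (choiceSet a j).Nonempty := by
  classical
  refine ⟨fun k => if k = j then 1 - a j else -a k, fun k hk => ?_⟩
  simp [hk]

theorem choiceSet_inter_choiceSet_add_nonempty {a d : ι → ℝ} {i j : ι} (hij : d i < d j) :
    (choiceSet a i ∩ choiceSet (a + d) j).Nonempty := by
  classical
  have hji : j ≠ i := fun h => hij.ne' (congrArg d h)
  -- In utilities `y = a + x`: `i` wins under `a`, `j` beats `i` by `(d j - d i) / 2` under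
  -- `a + d`, and all other alternatives are pushed far down.
  set y : ι → ℝ := fun k =>
    if k = i then 0 else if k = j then (d i - d j) / 2 else -(|d k| + |d i| + |d j| + 1)
  have hyi : y i = 0 := if_pos rfl
  have hyj : y j = (d i - d j) / 2 := by simp [y, hji]
  have hyk : ∀ k, k ≠ i → k ≠ j → y k = -(|d k| + |d i| + |d j| + 1) :=
    fun k hki hkj => by simp [y, hki, hkj]
  refine ⟨y - a, fun k hk => ?_, fun k hk => ?_⟩ <;> simp only [Pi.add_apply, Pi.sub_apply]
  · rcases eq_or_ne k j with rfl | hkj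
    · linarith
    · linarith [hyk k hk hkj, abs_nonneg (d k), abs_nonneg (d i), abs_nonneg (d j)]
  · rcases eq_or_ne k i with rfl | hki
    · linarith
    · linarith [hyk k hki hk, le_abs_self (d k), neg_abs_le (d i), neg_abs_le (d j),
        abs_nonneg (d i), abs_nonneg (d j)]

theorem isOpen_choiceSet [Finite ι] (a : ι → ℝ) (j : ι) : IsOpen (choiceSet a j) := by
  simp only [choiceSet, Set.ofPred_forall]
  exact isOpen_iInter_of_finite fun k => isOpen_iInter_of_finite fun _ =>
    isOpen_lt (by fun_prop) (by fun_prop)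

theorem iSup_add_eq_of_mem_choiceSet [Finite ι] {a x : ι → ℝ} {j : ι}
    (hx : x ∈ choiceSet a j) : ⨆ k, a k + x k = a j + x j := by
  have : Nonempty ι := ⟨j⟩
  refine le_antisymm (ciSup_le fun k => ?_)
    (le_ciSup (f := fun k => a k + x k) (Finite.bddAbove_range _) j)
  rcases eq_or_ne k j with rfl | hk
  exacts [le_rfl, (hx k hk).le]

theorem sum_indicator_choiceSet [Fintype ι] {M : Type*} [AddCommMonoid M] (f : ι → M)
    {a x : ι → ℝ} {j : ι} (hx : x ∈ choiceSet a j) :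
    ∑ k, (choiceSet a k).indicator (fun _ => f k) x = f j := by
  rw [Finset.sum_eq_single_of_mem j (mem_univ j) fun k _ hk =>
    Set.indicator_of_notMem (Set.disjoint_right.1 (disjoint_choiceSet a hk) hx) _]
  exact Set.indicator_of_mem hx _

end choiceSet

theorem lipschitzWith_iSup_add {ι : Type*} [Fintype ι] [Nonempty ι] (c : ι → ℝ) :
    LipschitzWith 1 fun x : ι → ℝ => ⨆ j, x j + c j :=
  LipschitzWith.of_le_add fun x y => ciSup_le fun j => by
    have hxy : x j - y j ≤ dist x y :=
      (Real.dist_eq (x j) (y j) ▸ le_abs_self (x j - y j)).trans (dist_le_pi_dist x y j)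
    calc x j + c j ≤ y j + c j + dist x y := by linarith
      _ ≤ (⨆ k, y k + c k) + dist x y := by
          gcongr; exact le_ciSup (f := fun k => y k + c k) (Finite.bddAbove_range _) j

section surplus

variable {ι : Type*} [Fintype ι] {ν : Measure (ι → ℝ)}

noncomputable def surplus (ν : Measure (ι → ℝ)) (a : ι → ℝ) : ℝ :=
  ∫ x, ⨆ j, a j + x j ∂ν

theorem continuous_iSup_add [Nonempty ι] (a : ι → ℝ) :
    Continuous fun x : ι → ℝ => ⨆ j, a j + x j := by
  simpa only [add_comm (a _)] using (lipschitzWith_iSup_add a).continuous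

theorem integrable_iSup_add [Nonempty ι] [IsFiniteMeasure ν] (hint : Integrable id ν)
    (a : ι → ℝ) : Integrable (fun x => ⨆ j, a j + x j) ν := by
  set f := fun x : ι → ℝ => ⨆ j, a j + x j
  have hf : LipschitzWith 1 f := by simpa only [f, add_comm (a _)] using lipschitzWith_iSup_add a
  refine ((integrable_const ‖f 0‖).add hint.norm).mono' hf.continuous.aestronglyMeasurable
    (ae_of_all _ fun x => ?_)
  have := hf.norm_sub_le x 0
  simp only [NNReal.coe_one, one_mul, sub_zero] at this
  simp only [Pi.add_apply, id]
  linarith [norm_le_norm_add_norm_sub' (f x) (f 0)]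

theorem hasFDerivAt_iSup_add {a x : ι → ℝ} {j : ι} (hx : x ∈ choiceSet a j) :
    HasFDerivAt (fun b : ι → ℝ => ⨆ k, b k + x k)
      (ContinuousLinearMap.proj (R := ℝ) (φ := fun _ : ι => ℝ) j) a := by
  have heq : (fun b : ι → ℝ => ⨆ k, b k + x k) =ᶠ[𝓝 a] fun b => b j + x j :=
    eventually_of_mem ((isOpen_choiceSet x j).mem_nhds (mem_choiceSet_comm.1 hx))
      fun b hb => iSup_add_eq_of_mem_choiceSet (mem_choiceSet_comm.2 hb)
  exact ((ContinuousLinearMap.proj (R := ℝ) (φ := fun _ : ι => ℝ) j).hasFDerivAt.add_const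
    (x j)).congr_of_eventuallyEq heq

theorem volume_setOf_add_apply_eq {j k : ι} (hjk : j ≠ k) (a : ι → ℝ) :
    volume {x : ι → ℝ | a j + x j = a k + x k} = 0 := by
  classical
  set L : (ι → ℝ) →ₗ[ℝ] ℝ :=
    LinearMap.proj (R := ℝ) (φ := fun _ : ι => ℝ) j - LinearMap.proj k
  have hL : LinearMap.ker L ≠ ⊤ := by
    rw [Ne, LinearMap.ker_eq_top]
    intro h
    simpa [L, Pi.single_eq_of_ne hjk.symm] using LinearMap.congr_fun h (Pi.single j 1)
  have hker : {y : ι → ℝ | y j = y k} = LinearMap.ker L := by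
    ext y
    simp [L, sub_eq_zero]
  calc volume {x : ι → ℝ | a j + x j = a k + x k}
      = volume ((fun x => a + x) ⁻¹' {y : ι → ℝ | y j = y k}) := rfl
    _ = 0 := by rw [measure_preimage_add, hker, Measure.addHaar_submodule volume _ hL]

theorem ae_exists_mem_choiceSet [Nonempty ι] (a : ι → ℝ) :
    ∀ᵐ x ∂(volume : Measure (ι → ℝ)), ∃ j, x ∈ choiceSet a j := by
  have hties :
      ∀ᵐ x ∂(volume : Measure (ι → ℝ)), ∀ j k, j ≠ k → a j + x j ≠ a k + x k := by
    simp only [ae_all_iff]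
    intro j k hjk
    simpa using measure_eq_zero_iff_ae_notMem.1 (volume_setOf_add_apply_eq hjk a)
  filter_upwards [hties] with x hx
  obtain ⟨j, -, hj⟩ := exists_max_image univ (fun k => a k + x k) univ_nonempty
  exact ⟨j, fun k hk => (hj k (mem_univ k)).lt_of_ne (hx k j hk)⟩

theorem hasFDerivAt_surplus [Nonempty ι] [IsFiniteMeasure ν] (hν : ν ≪ volume)
    (hint : Integrable id ν) (a : ι → ℝ) :
    HasFDerivAt (surplus ν)
      (∑ j, ν.real (choiceSet a j) •
        ContinuousLinearMap.proj (R := ℝ) (φ := fun _ : ι => ℝ) j) a := by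
  set P : ι → (ι → ℝ) →L[ℝ] ℝ := ContinuousLinearMap.proj
  have hmeas : ∀ j, MeasurableSet (choiceSet a j) :=
    fun j => (isOpen_choiceSet a j).measurableSet
  have hint_ind : ∀ j ∈ univ, Integrable ((choiceSet a j).indicator fun _ => P j) ν :=
    fun j _ => (integrable_const (P j)).indicator (hmeas j)
  have hint_eq : ∫ x, ∑ j, (choiceSet a j).indicator (fun _ => P j) x ∂ν
      = ∑ j, ν.real (choiceSet a j) • P j := by
    rw [integral_finsetSum _ hint_ind]
    exact Finset.sum_congr rfl fun j _ => integral_indicator_const _ (hmeas j)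
  rw [← hint_eq]
  refine (hasFDerivAt_integral_of_dominated_loc_of_lip (bound := fun _ => 1) univ_mem
    (Eventually.of_forall fun b => (continuous_iSup_add b).aestronglyMeasurable)
    (integrable_iSup_add hint a)
    (Finset.aestronglyMeasurable_fun_sum _ fun j _ => (hint_ind j (mem_univ j)).1)
    (ae_of_all _ fun x => ?_) (integrable_const 1) ?_).2
  · simpa using (lipschitzWith_iSup_add x).lipschitzOnWith (s := Set.univ)
  · filter_upwards [hν.ae_le (ae_exists_mem_choiceSet a)] with x ⟨j, hj⟩
    rw [sum_indicator_choiceSet P hj]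
    exact hasFDerivAt_iSup_add hj

theorem fderiv_surplus_apply_single [DecidableEq ι] [Nonempty ι] [IsFiniteMeasure ν]
    (hν : ν ≪ volume) (hint : Integrable id ν) (a : ι → ℝ) (j : ι) :
    fderiv ℝ (surplus ν) a (Pi.single j 1) = ν.real (choiceSet a j) := by
  simp [(hasFDerivAt_surplus hν hint a).fderiv, Pi.single_apply]

theorem measureReal_choiceSet_pos [IsFiniteMeasure ν] [ν.IsOpenPosMeasure] (a : ι → ℝ)
    (j : ι) : 0 < ν.real (choiceSet a j) :=
  ENNReal.toReal_pos ((isOpen_choiceSet a j).measure_ne_zero ν (choiceSet_nonempty a j))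
    (measure_ne_top ν _)

theorem sum_measureReal_choiceSet [Nonempty ι] [IsProbabilityMeasure ν] (hν : ν ≪ volume)
    (a : ι → ℝ) : ∑ j, ν.real (choiceSet a j) = 1 := by
  have hdisj : Set.PairwiseDisjoint (↑(univ : Finset ι)) (choiceSet a) :=
    fun i _ j _ hij => disjoint_choiceSet a hij
  have hfull : (⋃ j, choiceSet a j) =ᵐ[ν] (Set.univ : Set (ι → ℝ)) := by
    filter_upwards [hν.ae_le (ae_exists_mem_choiceSet a)] with x hx
    exact propext (iff_of_true (Set.mem_iUnion.2 hx) trivial)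
  rw [← measureReal_biUnion_finset hdisj fun j _ => (isOpen_choiceSet a j).measurableSet]
  simpa using measureReal_congr hfull

theorem measureReal_choiceSet_lt_choiceSet_add [IsFiniteMeasure ν] [ν.IsOpenPosMeasure]
    {a d : ι → ℝ} {i j : ι} (hmax : ∀ k, d k ≤ d j) (hij : d i < d j) :
    ν.real (choiceSet a j) < ν.real (choiceSet (a + d) j) := by
  set S := choiceSet a i ∩ choiceSet (a + d) j
  have hS : IsOpen S := (isOpen_choiceSet _ _).inter (isOpen_choiceSet _ _)
  have hdisj : Disjoint (choiceSet a j) S :=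
    (disjoint_choiceSet a fun h => hij.ne' (congrArg d h)).mono_right Set.inter_subset_left
  have hpos : 0 < ν.real S := ENNReal.toReal_pos
    (hS.measure_ne_zero ν (choiceSet_inter_choiceSet_add_nonempty hij)) (measure_ne_top ν _)
  calc ν.real (choiceSet a j) < ν.real (choiceSet a j) + ν.real S := by linarith
    _ = ν.real (choiceSet a j ∪ S) := (measureReal_union hdisj hS.measurableSet).symm
    _ ≤ ν.real (choiceSet (a + d) j) :=
      measureReal_mono
        (Set.union_subset (choiceSet_subset_choiceSet_add hmax) Set.inter_subset_right)

theorem sub_eq_sub_of_measureReal_choiceSet_eq [Nonempty ι] [IsFiniteMeasure ν]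
    [ν.IsOpenPosMeasure] {a b : ι → ℝ}
    (h : ∀ j, ν.real (choiceSet a j) = ν.real (choiceSet b j)) (i k : ι) :
    b i - a i = b k - a k := by
  obtain ⟨j, -, hj⟩ := exists_max_image univ (b - a) univ_nonempty
  have hmax : ∀ l, (b - a) l ≤ (b - a) j := fun l => hj l (mem_univ l)
  have hconst : ∀ l, (b - a) l = (b - a) j := fun l => (hmax l).eq_of_not_lt fun hlt => by
    have := measureReal_choiceSet_lt_choiceSet_add (ν := ν) (a := a) hmax hlt
    rw [add_sub_cancel, h] at this
    exact this.false
  simpa using (hconst i).trans (hconst k).symm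

end surplus

/-- Injectivity of the ARUM choice-probability map: with full-support errors,
the gradient of the surplus function, restricted to {a : a₀ = 0}, is injective
into the interior of the unit simplex. -/
theorem stmt_11 {Ωs : Type*} [MeasurableSpace Ωs] (μ : Measure Ωs)
    [IsProbabilityMeasure μ] {J : ℕ}
    (ε : Ωs → (Fin (J + 1) → ℝ)) (hmeas : Measurable ε)
    (hac : (Measure.map ε μ) ≪ (volume : Measure (Fin (J + 1) → ℝ)))
    (hfull : ∀ s : Set (Fin (J + 1) → ℝ), IsOpen s → s.Nonempty →
      0 < Measure.map ε μ s)
    (hint : ∀ j, Integrable (fun ω => ε ω j) μ)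
    (G : (Fin (J + 1) → ℝ) → ℝ)
    (hG : ∀ a, G a = ∫ ω, (⨆ j, (a j + ε ω j)) ∂μ) :
    (∀ a j, 0 < fderiv ℝ G a (Pi.single j 1)) ∧
    (∀ a, ∑ j, fderiv ℝ G a (Pi.single j 1) = 1) ∧
    (∀ a₁ a₂ : Fin (J + 1) → ℝ, a₁ 0 = 0 → a₂ 0 = 0 →
      (∀ j, fderiv ℝ G a₁ (Pi.single j 1) = fderiv ℝ G a₂ (Pi.single j 1)) →
      a₁ = a₂) := by
  set ν := μ.map ε
  have : IsProbabilityMeasure ν := Measure.isProbabilityMeasure_map hmeas.aemeasurable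
  have : ν.IsOpenPosMeasure := ⟨fun U hU hne => (hfull U hU hne).ne'⟩
  have hνint : Integrable id ν :=
    (integrable_map_measure aestronglyMeasurable_id hmeas.aemeasurable).2
      (integrable_pi_iff.2 hint)
  have hGν : G = surplus ν := funext fun a => by
    rw [hG, surplus, integral_map hmeas.aemeasurable (continuous_iSup_add a).aestronglyMeasurable]
  have hgrad : ∀ a j, fderiv ℝ G a (Pi.single j 1) = ν.real (choiceSet a j) :=
    hGν ▸ fderiv_surplus_apply_single hac hνint
  simp only [hgrad]
  refine ⟨measureReal_choiceSet_pos, sum_measureReal_choiceSet hac,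
    fun a₁ a₂ h₁ h₂ h => ?_⟩
  funext i
  linarith [sub_eq_sub_of_measureReal_choiceSet_eq h i 0]
end
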